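/- Suppose in addition that u_T satisfies the Oleinik condition (O) at T. Then the set-valued map M is surjective: ⋃_{x ∈ ℝ} M(x) = ℝ, i.e. for every ξ ∈ ℝ there exists x ∈ ℝ with ξ ∈ M(x). -/

import Mathlib

open Filter MeasureTheory

/-- Condition (f): `f` is `C²`, strongly convex (`f'' > 0` everywhere), and
`f' → ∓∞` at `∓∞`. -/
def CondF (f : ℝ → ℝ) : Prop :=
  ContDiff ℝ 2 f ∧ (∀ x, 0 < deriv (deriv f) x) ∧
    Tendsto (deriv f) atBot atBot ∧ Tendsto (deriv f) atTop atTop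

/-- The Legendre transform `f*(y) = sup_x (y·x − f(x))`. -/
noncomputable def legendre (f : ℝ → ℝ) (y : ℝ) : ℝ :=
  sSup (Set.range fun x => y * x - f x)

/-- `U_T(x) = ∫_{x̌}^x u_T`. -/
noncomputable def UT (uT : ℝ → ℝ) (xc x : ℝ) : ℝ := ∫ ξ in xc..x, uT ξ

/-- `U_o^♭(x) = sup_ξ [U_T(ξ) − T f*((ξ−x)/T)]`. -/
noncomputable def Uflat (f : ℝ → ℝ) (T : ℝ) (uT : ℝ → ℝ) (xc x : ℝ) : ℝ :=
  sSup (Set.range fun ξ => UT uT xc ξ - T * legendre f ((ξ - x) / T))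

/-- `M(x)`: the set of maximizers in the definition of `U_o^♭(x)`. -/
def MSet (f : ℝ → ℝ) (T : ℝ) (uT : ℝ → ℝ) (xc x : ℝ) : Set ℝ :=
  {ξ | UT uT xc ξ = Uflat f T uT xc x + T * legendre f ((ξ - x) / T)}

/-- Oleinik condition (O) at `T`. -/
def Oleinik (f : ℝ → ℝ) (T : ℝ) (uT : ℝ → ℝ) : Prop :=
  ∀ x Δ : ℝ, 0 < Δ → deriv f (uT (x + Δ)) - deriv f (uT x) ≤ Δ / T

/-- The Hopf–Lax operator at time `T`: `(S_T U)(x) = inf_ξ [U(ξ) + T f*((x−ξ)/T)]`. -/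
noncomputable def HopfLax (f : ℝ → ℝ) (T : ℝ) (U : ℝ → ℝ) (x : ℝ) : ℝ :=
  sInf (Set.range fun ξ => U ξ + T * legendre f ((x - ξ) / T))

/-- Left continuity of a real function. -/
def LeftCts (u : ℝ → ℝ) : Prop :=
  ∀ x, Tendsto u (nhdsWithin x (Set.Iio x)) (nhds (u x))

/-- `II_T(U_T; J)`: Lipschitz functions with a.e. derivative in `J` evolving into `U_T`
under the Hopf–Lax semigroup. -/
def IIT (f : ℝ → ℝ) (T : ℝ) (uT : ℝ → ℝ) (xc : ℝ) (J : Set ℝ) : Set (ℝ → ℝ) :=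
  {U | (∃ K, LipschitzWith K U) ∧ (∀ᵐ x ∂volume, deriv U x ∈ J) ∧
    ∀ x, HopfLax f T U x = UT uT xc x}

/-- `U_o^♯(x) = sup { U(x) : U ∈ II_T(U_T; J) }`. -/
noncomputable def Usharp (f : ℝ → ℝ) (T : ℝ) (uT : ℝ → ℝ) (xc : ℝ) (J : Set ℝ) (x : ℝ) : ℝ :=
  sSup ((fun U : ℝ → ℝ => U x) '' IIT f T uT xc J)

/-!
Take `x = ξ - T f'(u_T ξ)`, so that `(ξ - x)/T = f'(u_T ξ)`. Since `(f*)' = (f')⁻¹`, the function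
`η ↦ U_T(η) - T f*((η - x)/T)` has a.e. derivative `u_T(η) - (f')⁻¹((η - x)/T)`, and the Oleinik
condition says exactly that `f'(u_T η) - (η - x)/T` is `≥ 0` left of `ξ` and `≤ 0` right of `ξ`.
Hence this function is maximal at `ξ`, i.e. `ξ ∈ M(x)`. The same sign-change argument applied to
`f` itself gives the tangent-line inequality behind `f*(y) = y (f')⁻¹(y) - f((f')⁻¹(y))`.
-/

open Set

lemma sSup_range_eq_of_forall_le {ι : Type*} {F : ι → ℝ} {a : ι} (h : ∀ i, F i ≤ F a) :
    sSup (range F) = F a :=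
  have : Nonempty ι := ⟨a⟩
  ciSup_eq_of_forall_le_of_forall_lt_exists_gt h fun _ hw => ⟨a, hw⟩

theorem integral_le_sub_of_le_deriv_right_of_deriv_le_left {u φ φ' : ℝ → ℝ} {a b : ℝ}
    (hu : IntervalIntegrable u volume a b) (hφ : ∀ s, HasDerivAt φ (φ' s) s)
    (h_right : ∀ s, a < s → u s ≤ φ' s) (h_left : ∀ s, s < a → φ' s ≤ u s) :
    ∫ s in a..b, u s ≤ φ b - φ a := by
  have hcont : Continuous φ := continuous_iff_continuousAt.2 fun s => (hφ s).continuousAt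
  rcases le_total a b with hab | hba
  · exact intervalIntegral.integral_le_sub_of_hasDeriv_right_of_le hab hcont.continuousOn
      (fun s _ => (hφ s).hasDerivWithinAt)
      ((intervalIntegrable_iff_integrableOn_Icc_of_le hab).1 hu)
      fun s hs => h_right s hs.1
  · have := intervalIntegral.sub_le_integral_of_hasDeriv_right_of_le hba hcont.continuousOn
      (fun s _ => (hφ s).hasDerivWithinAt)
      ((intervalIntegrable_iff_integrableOn_Icc_of_le hba).1 hu.symm)
      fun s hs => h_left s hs.2
    rw [intervalIntegral.integral_symm]
    linarith

namespace CondF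

variable {f : ℝ → ℝ}

lemma differentiable (hf : CondF f) : Differentiable ℝ f :=
  hf.1.differentiable (by norm_num)

lemma differentiable_deriv (hf : CondF f) : Differentiable ℝ (deriv f) :=
  ((contDiff_succ_iff_deriv (n := 1)).1 hf.1).2.2.differentiable one_ne_zero

lemma strictMono_deriv (hf : CondF f) : StrictMono (deriv f) :=
  strictMono_of_deriv_pos hf.2.1

noncomputable def derivIso (hf : CondF f) : ℝ ≃o ℝ :=
  hf.strictMono_deriv.orderIsoOfSurjective _
    (hf.differentiable_deriv.continuous.surjective hf.2.2.2 hf.2.2.1)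

@[simp]
lemma derivIso_apply (hf : CondF f) (x : ℝ) : hf.derivIso x = deriv f x := rfl

lemma legendre_eq (hf : CondF f) (y : ℝ) :
    legendre f y = y * hf.derivIso.symm y - f (hf.derivIso.symm y) := by
  set p := hf.derivIso.symm y
  have hp : deriv f p = y := hf.derivIso.apply_symm_apply y
  have tangent (x : ℝ) : y * x - f x ≤ y * p - f p := by
    have := integral_le_sub_of_le_deriv_right_of_deriv_le_left (u := fun _ => y) (b := x)
      intervalIntegrable_const (fun s => (hf.differentiable s).hasDerivAt)
      (fun s hs => hp ▸ (hf.strictMono_deriv hs).le) (fun s hs => hp ▸ (hf.strictMono_deriv hs).le)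
    rw [intervalIntegral.integral_const, smul_eq_mul] at this
    linarith
  exact sSup_range_eq_of_forall_le (F := fun x => y * x - f x) tangent

lemma hasDerivAt_legendre (hf : CondF f) (y : ℝ) :
    HasDerivAt (legendre f) (hf.derivIso.symm y) y := by
  set e := hf.derivIso
  have hinv : HasDerivAt e.symm (deriv (deriv f) (e.symm y))⁻¹ y :=
    .of_local_left_inverse e.symm.continuous.continuousAt
      (hf.differentiable_deriv _).hasDerivAt (hf.2.1 _).ne'
      (Eventually.of_forall e.apply_symm_apply)
  have hp : deriv f (e.symm y) = y := e.apply_symm_apply y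
  have hdiff : HasDerivAt (fun z => z * e.symm z - f (e.symm z)) (1 * e.symm y +
      y * (deriv (deriv f) (e.symm y))⁻¹ - deriv f (e.symm y) * (deriv (deriv f) (e.symm y))⁻¹) y :=
    ((hasDerivAt_id' y).mul hinv).sub ((hf.differentiable _).hasDerivAt.comp y hinv)
  rw [show legendre f = fun z => z * e.symm z - f (e.symm z) from funext hf.legendre_eq]
  convert hdiff using 1
  rw [hp]
  ring

lemma hasDerivAt_mul_legendre_div (hf : CondF f) {T : ℝ} (hT : T ≠ 0) (x s : ℝ) :
    HasDerivAt (fun s => T * legendre f ((s - x) / T)) (hf.derivIso.symm ((s - x) / T)) s := by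
  refine (((hf.hasDerivAt_legendre _).comp s
    (((hasDerivAt_id' s).sub_const x).div_const T)).const_mul T).congr_deriv ?_
  field_simp

end CondF

namespace Oleinik

variable {f : ℝ → ℝ} {T : ℝ} {uT : ℝ → ℝ}

lemma deriv_le_of_lt (hO : Oleinik f T uT) {ξ s : ℝ} (h : ξ < s) :
    deriv f (uT s) ≤ deriv f (uT ξ) + (s - ξ) / T := by
  have := hO ξ (s - ξ) (sub_pos.2 h)
  rw [add_sub_cancel] at this
  linarith

lemma le_derivIso_symm (hf : CondF f) (hT : T ≠ 0) (hO : Oleinik f T uT) {ξ s : ℝ} (h : ξ < s) :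
    uT s ≤ hf.derivIso.symm ((s - (ξ - T * deriv f (uT ξ))) / T) := by
  rw [OrderIso.le_symm_apply, hf.derivIso_apply,
    show (s - (ξ - T * deriv f (uT ξ))) / T = deriv f (uT ξ) + (s - ξ) / T by field_simp; ring]
  exact hO.deriv_le_of_lt h

lemma derivIso_symm_le (hf : CondF f) (hT : T ≠ 0) (hO : Oleinik f T uT) {ξ s : ℝ} (h : s < ξ) :
    hf.derivIso.symm ((s - (ξ - T * deriv f (uT ξ))) / T) ≤ uT s := by
  rw [OrderIso.symm_apply_le, hf.derivIso_apply,
    show (s - (ξ - T * deriv f (uT ξ))) / T = deriv f (uT ξ) - (ξ - s) / T by field_simp; ring]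
  linarith [hO.deriv_le_of_lt h]

end Oleinik

lemma mem_MSet_of_forall_le {f : ℝ → ℝ} {T : ℝ} {uT : ℝ → ℝ} {xc x ξ : ℝ}
    (h : ∀ η, UT uT xc η - T * legendre f ((η - x) / T) ≤
      UT uT xc ξ - T * legendre f ((ξ - x) / T)) :
    ξ ∈ MSet f T uT xc x := by
  rw [MSet, mem_ofPred_eq, Uflat, sSup_range_eq_of_forall_le h]
  ring

theorem stmt_9 (f : ℝ → ℝ) (hf : CondF f) (T : ℝ) (hT : 0 < T)
    (uT : ℝ → ℝ) (huT : Measurable uT) (C : ℝ) (hC : ∀ x, |uT x| ≤ C) (xc : ℝ)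
    (hO : Oleinik f T uT) :
    ∀ ξ : ℝ, ∃ x : ℝ, ξ ∈ MSet f T uT xc x := by
  intro ξ
  have hint (a b : ℝ) : IntervalIntegrable uT volume a b :=
    intervalIntegrable_const.mono_fun' huT.aestronglyMeasurable
      (ae_of_all _ fun s => (Real.norm_eq_abs _).trans_le (hC s))
  refine ⟨ξ - T * deriv f (uT ξ), mem_MSet_of_forall_le fun η => ?_⟩
  have hgain := integral_le_sub_of_le_deriv_right_of_deriv_le_left (hint ξ η)
    (hf.hasDerivAt_mul_legendre_div hT.ne' _)
    (fun s hs => hO.le_derivIso_symm hf hT.ne' hs) (fun s hs => hO.derivIso_symm_le hf hT.ne' hs)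
  have hUT : UT uT xc η - UT uT xc ξ = ∫ s in ξ..η, uT s :=
    intervalIntegral.integral_interval_sub_left (hint xc η) (hint xc ξ)
  linarith
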